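/- An arrangement of N hyperplanes in ℝ^n has at most ∑_{k=0}^n C(N,k) full-dimensional regions, i.e., the number of sign vectors 𝔰 ∈ {-1,+1}^N for which ⋂_{i=1}^N H^{𝔰(i)}_{ℓ_i} is nonempty is at most ∑_{k=0}^n C(N,k). -/
import Mathlib

open Finset

/-- f is an affine function in explicit coordinates. -/
def IsAffF {n : ℕ} (f : (Fin n → ℝ) → ℝ) : Prop :=
  ∃ w : Fin n → ℝ, ∃ c : ℝ, ∀ x, f x = (∑ k, w k * x k) + c

/-- The set of realized sign vectors (regions). -/
def Reg {N n : ℕ} (ℓ : Fin N → (Fin n → ℝ) → ℝ) : Set (Fin N → Bool) :=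
  {σ : Fin N → Bool |
      (⋂ i : Fin N, (if σ i then {x | ℓ i x > 0} else {x | ℓ i x < 0})).Nonempty}

lemma mem_Reg_iff {N n : ℕ} {ℓ : Fin N → (Fin n → ℝ) → ℝ} {σ : Fin N → Bool} :
    σ ∈ Reg ℓ ↔ ∃ x : Fin n → ℝ,
      ∀ i, (σ i = true → 0 < ℓ i x) ∧ (σ i = false → ℓ i x < 0) := by
  unfold Reg
  simp only [Set.mem_setOf_eq, Set.Nonempty, Set.mem_iInter]
  constructor
  · rintro ⟨x, hx⟩
    refine ⟨x, fun i => ?_⟩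
    have h := hx i
    constructor
    · intro hb; rw [hb] at h; simpa using h
    · intro hb; rw [hb] at h; simpa using h
  · rintro ⟨x, hx⟩
    refine ⟨x, fun i => ?_⟩
    cases hb : σ i
    · have := (hx i).2 hb
      simpa [hb] using this
    · have := (hx i).1 hb
      simpa [hb] using this

lemma isAffF_comp {m n : ℕ} {f : (Fin n → ℝ) → ℝ} (hf : IsAffF f)
    {g : (Fin m → ℝ) → (Fin n → ℝ)} (hg : ∀ j, IsAffF (fun y => g y j)) :
    IsAffF (fun y => f (g y)) := by
  obtain ⟨w, c, hw⟩ := hf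
  choose u d hu using hg
  refine ⟨fun k => ∑ j, w j * u j k, (∑ j, w j * d j) + c, fun y => ?_⟩
  have h1 : ∀ j, g y j = (∑ k, u j k * y k) + d j := fun j => hu j y
  show f (g y) = _
  rw [hw]
  calc (∑ j, w j * g y j) + c
      = (∑ j, ((∑ k, w j * (u j k * y k)) + w j * d j)) + c := by
        simp_rw [h1, mul_add, Finset.mul_sum]
    _ = ((∑ j, ∑ k, w j * (u j k * y k)) + (∑ j, w j * d j)) + c := by
        rw [Finset.sum_add_distrib]
    _ = (∑ k, (∑ j, w j * u j k) * y k) + ((∑ j, w j * d j) + c) := by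
        rw [Finset.sum_comm]
        simp_rw [Finset.sum_mul, mul_assoc]
        ring

lemma isAffF_combo {n : ℕ} {f : (Fin n → ℝ) → ℝ} (hf : IsAffF f) (a b : Fin n → ℝ) (t : ℝ) :
    f (fun k => (1 - t) * a k + t * b k) = (1 - t) * f a + t * f b := by
  obtain ⟨w, c, hw⟩ := hf
  rw [hw, hw, hw]
  have : (∑ k, w k * ((1 - t) * a k + t * b k))
      = (1 - t) * (∑ k, w k * a k) + t * (∑ k, w k * b k) := by
    rw [Finset.mul_sum, Finset.mul_sum, ← Finset.sum_add_distrib]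
    congr 1; funext k; ring
  rw [this]; ring

lemma pascal_sum (N m : ℕ) :
    ∑ k ∈ range (m + 2), (N + 1).choose k
      = (∑ k ∈ range (m + 2), N.choose k) + ∑ k ∈ range (m + 1), N.choose k := by
  rw [Finset.sum_range_succ' (fun k => (N + 1).choose k),
    Finset.sum_range_succ' (fun k => N.choose k)]
  simp_rw [Nat.choose_succ_succ]
  rw [Finset.sum_add_distrib]
  simp only [Nat.choose_zero_right]
  ring

lemma region_sign_eq {N n : ℕ} (ℓ : Fin N → (Fin n → ℝ) → ℝ) (σ τ : Fin N → Bool)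
    (x : Fin n → ℝ)
    (hσ : ∀ i, (σ i = true → 0 < ℓ i x) ∧ (σ i = false → ℓ i x < 0))
    (hτ : ∀ i, (τ i = true → 0 < ℓ i x) ∧ (τ i = false → ℓ i x < 0)) : σ = τ := by
  funext i
  cases hσi : σ i <;> cases hτi : τ i
  · rfl
  · have := (hσ i).2 hσi; have := (hτ i).1 hτi; linarith
  · have := (hσ i).1 hσi; have := (hτ i).2 hτi; linarith
  · rfl

theorem key (N : ℕ) : ∀ (n : ℕ) (ℓ : Fin N → (Fin n → ℝ) → ℝ), (∀ i, IsAffF (ℓ i)) →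
    (Reg ℓ).ncard ≤ ∑ k ∈ Finset.range (n + 1), N.choose k := by
  induction N with
  | zero =>
    intro n ℓ _
    have h1 : (Reg ℓ).ncard ≤ 1 := by
      rw [Set.ncard_le_one (Set.toFinite _)]
      intro a _ b _
      exact Subsingleton.elim a b
    have h2 : (1 : ℕ) ≤ ∑ k ∈ Finset.range (n + 1), Nat.choose 0 k := by
      have : Nat.choose 0 0 ≤ ∑ k ∈ Finset.range (n + 1), Nat.choose 0 k :=
        Finset.single_le_sum (f := fun k => Nat.choose 0 k)
          (fun k _ => Nat.zero_le _) (Finset.mem_range.2 (Nat.succ_pos n))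
      simpa using this
    omega
  | succ N IH =>
    intro n ℓ hℓ
    obtain _ | m := n
    · -- n = 0 : the domain is a single point, so at most one region
      have h1 : (Reg ℓ).ncard ≤ 1 := by
        rw [Set.ncard_le_one (Set.toFinite _)]
        intro a ha b hb
        obtain ⟨x, hx⟩ := mem_Reg_iff.1 ha
        obtain ⟨y, hy⟩ := mem_Reg_iff.1 hb
        have hxy : y = x := Subsingleton.elim y x
        rw [hxy] at hy
        exact region_sign_eq ℓ a b x hx hy
      have h2 : (1 : ℕ) ≤ ∑ k ∈ Finset.range (0 + 1), Nat.choose (N + 1) k := by simp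
      omega
    · -- n = m + 1
      obtain ⟨w, c, hwc⟩ := hℓ (Fin.last N)
      set A : Set (Fin (N + 1) → Bool) := Reg ℓ with hA
      set ℓc : Fin N → (Fin (m + 1) → ℝ) → ℝ := fun i => ℓ i.castSucc with hℓc
      set B : Set (Fin N → Bool) :=
        {τ | Fin.snoc τ true ∈ A ∧ Fin.snoc τ false ∈ A} with hB
      -- restriction to first N functions
      have hrestr : ∀ σ ∈ A, Fin.init σ ∈ Reg ℓc := by
        intro σ hσ
        obtain ⟨x, hx⟩ := mem_Reg_iff.1 hσ
        exact mem_Reg_iff.2 ⟨x, fun i => hx i.castSucc⟩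
      -- counting: |A| ≤ |Reg ℓc| + |B|
      have hcount : A.ncard ≤ (Reg ℓc).ncard + B.ncard := by
        classical
        set A₂ : Set (Fin (N + 1) → Bool) :=
          {σ ∈ A | σ (Fin.last N) = false ∧ Fin.init σ ∈ B} with hA₂
        have hsplit : A ⊆ (A \ A₂) ∪ A₂ := by
          intro σ hσ
          by_cases h : σ ∈ A₂
          · exact Or.inr h
          · exact Or.inl ⟨hσ, h⟩
        have h1 : (A \ A₂).ncard ≤ (Reg ℓc).ncard := by
          apply Set.ncard_le_ncard_of_injOn Fin.init
          · exact fun σ hσ => hrestr σ hσ.1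
          · intro σ₁ h₁ σ₂ h₂ hinit
            by_cases hlast : σ₁ (Fin.last N) = σ₂ (Fin.last N)
            · calc σ₁ = Fin.snoc (Fin.init σ₁) (σ₁ (Fin.last N)) := (Fin.snoc_init_self σ₁).symm
                _ = Fin.snoc (Fin.init σ₂) (σ₂ (Fin.last N)) := by rw [hinit, hlast]
                _ = σ₂ := Fin.snoc_init_self σ₂
            · exfalso
              have hmemB : Fin.init σ₁ ∈ B := by
                have e₁ : Fin.snoc (Fin.init σ₁) (σ₁ (Fin.last N)) = σ₁ := Fin.snoc_init_self σ₁
                have e₂ : Fin.snoc (Fin.init σ₁) (σ₂ (Fin.last N)) = σ₂ := by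
                  rw [hinit]; exact Fin.snoc_init_self σ₂
                cases hb₁ : σ₁ (Fin.last N)
                · have hb₂ : σ₂ (Fin.last N) = true := by
                    cases hb₂ : σ₂ (Fin.last N)
                    · exact absurd (hb₁.trans hb₂.symm) hlast
                    · rfl
                  exact ⟨by rw [← hb₂, e₂]; exact h₂.1, by rw [← hb₁, e₁]; exact h₁.1⟩
                · have hb₂ : σ₂ (Fin.last N) = false := by
                    cases hb₂ : σ₂ (Fin.last N)
                    · rfl
                    · exact absurd (hb₁.trans hb₂.symm) hlast
                  exact ⟨by rw [← hb₁, e₁]; exact h₁.1, by rw [← hb₂, e₂]; exact h₂.1⟩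
              -- one of σ₁, σ₂ has last = false and init ∈ B, contradicting membership in A \ A₂
              cases hb₁ : σ₁ (Fin.last N)
              · exact h₁.2 ⟨h₁.1, hb₁, hmemB⟩
              · cases hb₂ : σ₂ (Fin.last N)
                · exact h₂.2 ⟨h₂.1, hb₂, by rwa [← hinit]⟩
                · exact hlast (by rw [hb₁, hb₂])
        have h2 : A₂.ncard ≤ B.ncard := by
          apply Set.ncard_le_ncard_of_injOn Fin.init
          · exact fun σ hσ => hσ.2.2
          · intro σ₁ h₁ σ₂ h₂ hinit
            calc σ₁ = Fin.snoc (Fin.init σ₁) (σ₁ (Fin.last N)) := (Fin.snoc_init_self σ₁).symm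
              _ = Fin.snoc (Fin.init σ₂) (σ₂ (Fin.last N)) := by
                  rw [hinit, h₁.2.1, h₂.2.1]
              _ = σ₂ := Fin.snoc_init_self σ₂
        calc A.ncard ≤ ((A \ A₂) ∪ A₂).ncard :=
              Set.ncard_le_ncard hsplit (Set.toFinite _)
          _ ≤ (A \ A₂).ncard + A₂.ncard := Set.ncard_union_le _ _
          _ ≤ (Reg ℓc).ncard + B.ncard := Nat.add_le_add h1 h2
      -- bound on Reg ℓc by IH
      have hc_aff : ∀ i, IsAffF (ℓc i) := fun i => hℓ i.castSucc
      have hA' : (Reg ℓc).ncard ≤ ∑ k ∈ Finset.range (m + 2), N.choose k :=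
        IH (m + 1) ℓc hc_aff
      -- bound on B
      have hBbound : B.ncard ≤ ∑ k ∈ Finset.range (m + 1), N.choose k := by
        by_cases hw0 : ∀ j, w j = 0
        · -- last function is a constant; B is empty
          have hBempty : B = ∅ := by
            ext τ
            simp only [Set.mem_empty_iff_false, iff_false]
            rintro ⟨ht, hf⟩
            obtain ⟨xa, hxa⟩ := mem_Reg_iff.1 ht
            obtain ⟨xb, hxb⟩ := mem_Reg_iff.1 hf
            have hp : 0 < ℓ (Fin.last N) xa :=
              (hxa (Fin.last N)).1 (by simp)
            have hq : ℓ (Fin.last N) xb < 0 :=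
              (hxb (Fin.last N)).2 (by simp)
            rw [hwc] at hp hq
            simp only [hw0, zero_mul, Finset.sum_const_zero, zero_add] at hp hq
            linarith
          rw [hBempty]
          simp
        · push_neg at hw0
          obtain ⟨j, hj⟩ := hw0
          -- parametrize the hyperplane { ℓ last = 0 }
          set φ : (Fin m → ℝ) → (Fin (m + 1) → ℝ) := fun y =>
            j.insertNth (-(c + ∑ k, w (j.succAbove k) * y k) / w j) y with hφ
          have hφ_same : IsAffF (fun y => φ y j) := by
            refine ⟨fun k => -(w (j.succAbove k) / w j), -(c / w j), fun y => ?_⟩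
            simp only [hφ, Fin.insertNth_apply_same]
            rw [neg_div, add_div, neg_add]
            simp_rw [neg_mul, div_mul_eq_mul_div]
            rw [Finset.sum_neg_distrib, ← Finset.sum_div]
            ring
          have hφ_above : ∀ k, IsAffF (fun y => φ y (j.succAbove k)) := by
            intro k
            refine ⟨fun k' => if k' = k then 1 else 0, 0, fun y => ?_⟩
            simp only [hφ, Fin.insertNth_apply_succAbove]
            rw [add_zero]
            have : ∀ k' : Fin m, (if k' = k then (1:ℝ) else 0) * y k'
                = (if k' = k then y k' else 0) := by
              intro k'; split <;> simp
            simp_rw [this]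
            rw [Finset.sum_ite_eq' Finset.univ k (fun k' => y k')]
            simp
          have hφ_coord : ∀ i, IsAffF (fun y => φ y i) := fun i =>
            Fin.succAboveCases (α := fun i => IsAffF (fun y => φ y i)) j hφ_same hφ_above i
          set ℓ'' : Fin N → (Fin m → ℝ) → ℝ := fun i y => ℓ i.castSucc (φ y) with hℓ''
          have hℓ''aff : ∀ i, IsAffF (ℓ'' i) :=
            fun i => isAffF_comp (hℓ i.castSucc) hφ_coord
          have hBsub : B ⊆ Reg ℓ'' := by
            intro τ ⟨ht, hf⟩
            obtain ⟨a, ha⟩ := mem_Reg_iff.1 ht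
            obtain ⟨b, hb⟩ := mem_Reg_iff.1 hf
            have hp : 0 < ℓ (Fin.last N) a := (ha (Fin.last N)).1 (by simp)
            have hq : ℓ (Fin.last N) b < 0 := (hb (Fin.last N)).2 (by simp)
            set p := ℓ (Fin.last N) a
            set q := ℓ (Fin.last N) b
            set t : ℝ := p / (p - q) with hts
            have hpq : 0 < p - q := by linarith
            have ht0 : 0 < t := div_pos hp hpq
            have ht1 : t < 1 := (div_lt_one hpq).2 (by linarith)
            set x : Fin (m + 1) → ℝ := fun k => (1 - t) * a k + t * b k with hx
            have hcombo : ∀ i : Fin (N + 1), ℓ i x = (1 - t) * ℓ i a + t * ℓ i b :=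
              fun i => isAffF_combo (hℓ i) a b t
            have hzero : ℓ (Fin.last N) x = 0 := by
              rw [hcombo]
              show (1 - t) * p + t * q = 0
              rw [hts]
              field_simp
              ring
            have hsign : ∀ i : Fin N,
                (τ i = true → 0 < ℓ i.castSucc x) ∧ (τ i = false → ℓ i.castSucc x < 0) := by
              intro i
              have hai := ha i.castSucc
              have hbi := hb i.castSucc
              rw [Fin.snoc_castSucc] at hai hbi
              constructor
              · intro h
                rw [hcombo]
                have h1 := hai.1 h
                have h2 := hbi.1 h
                have := mul_pos (by linarith : (0:ℝ) < 1 - t) h1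
                have := mul_pos ht0 h2
                linarith
              · intro h
                rw [hcombo]
                have h1 := hai.2 h
                have h2 := hbi.2 h
                nlinarith
            -- x lies on the hyperplane; pull it back through φ
            set y : Fin m → ℝ := fun k => x (j.succAbove k) with hy
            have hφy0 : φ y j = x j := by
              simp only [hφ, Fin.insertNth_apply_same]
              have hsum : (∑ i, w i * x i) + c = 0 := by rw [← hwc]; exact hzero
              rw [Fin.sum_univ_succAbove (fun i => w i * x i) j] at hsum
              have hxj : w j * x j = -(c + ∑ k, w (j.succAbove k) * x (j.succAbove k)) := by
                linarith
              rw [eq_comm, eq_div_iff hj]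
              simp only [hy]
              linarith [hxj]
            have hφys : ∀ k, φ y (j.succAbove k) = x (j.succAbove k) := by
              intro k
              simp only [hφ, Fin.insertNth_apply_succAbove, hy]
            have hφy : φ y = x := funext fun i =>
              Fin.succAboveCases (α := fun i => φ y i = x i) j hφy0 hφys i
            refine mem_Reg_iff.2 ⟨y, fun i => ?_⟩
            show (τ i = true → 0 < ℓ i.castSucc (φ y)) ∧ (τ i = false → ℓ i.castSucc (φ y) < 0)
            rw [hφy]
            exact hsign i
          calc B.ncard ≤ (Reg ℓ'').ncard :=
                Set.ncard_le_ncard hBsub (Set.toFinite _)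
            _ ≤ ∑ k ∈ Finset.range (m + 1), N.choose k := IH m ℓ'' hℓ''aff
      calc A.ncard ≤ (Reg ℓc).ncard + B.ncard := hcount
        _ ≤ (∑ k ∈ Finset.range (m + 2), N.choose k)
              + ∑ k ∈ Finset.range (m + 1), N.choose k := Nat.add_le_add hA' hBbound
        _ = ∑ k ∈ Finset.range (m + 1 + 1), (N + 1).choose k := (pascal_sum N m).symm

theorem stmt6 {n N : ℕ} (ℓ : Fin N → (Fin n → ℝ) → ℝ)
    (haff : ∀ i, ∃ (w : Fin n → ℝ) (c : ℝ), ∀ x, ℓ i x = (∑ k, w k * x k) + c) :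
    Set.ncard {σ : Fin N → Bool |
        (⋂ i : Fin N, (if σ i then {x | ℓ i x > 0} else {x | ℓ i x < 0})).Nonempty} ≤
      ∑ k ∈ Finset.range (n + 1), N.choose k := by
  exact key N n ℓ haff
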